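/- arXiv:2212.14139 — 2 statements merged into one kernel-verified Lean document; each statement's English description precedes it below -/
import Mathlib

section
/- Let c be a nonzero integer. Then X, Y ∈ M₂(ℤ) satisfy X⁴ + Y⁴ = c⁴·I and XY ≠ YX if and only if X = [[t₁, t₂],[t₃, −t₁]] and Y = [[s₁, s₂],[s₃, −s₁]] for some integers t₁, t₂, t₃, s₁, s₂, s₃ such that (t₁² + t₂t₃)² + (s₁² + s₂s₃)² = c⁴ and the vectors (t₁, t₂, t₃) and (s₁, s₂, s₃) in ℚ³ are linearly independent over ℚ. -/
/-!
By Cayley–Hamilton a 2×2 matrix `A` with trace `t` and determinant `d` satisfies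
`A⁴ = (t³ - 2td) • A + (d² - t²d) • 1`. If `X⁴ + Y⁴` is scalar and `X`, `Y` do not commute, then
`(t³ - 2td) • X` is a combination of `Y` and `1`, hence commutes with `Y`, so `t³ - 2td = 0` for
both matrices. A nonzero trace then means `t² = 2d`, and the scalar equation turns into either
`-(d² + e²) = c⁴` or `c⁴ + 4u⁴ = e²` with `u ≠ 0`. The latter is impossible by infinite descent:
two Pythagorean-triple parametrisations lead from a primitive `x⁴ + 4y⁴ = z²` to `x² + q⁴ = p⁴`
and from there to a primitive `a⁴ + 4b⁴ = p²` with `|p| < |z|`.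
For traceless matrices `X⁴ = (det X)² • 1`, and `X`, `Y` commute exactly when the cross product
of their coefficient vectors vanishes.
-/

theorem Int.exists_eq_sq_of_isCoprime_of_nonneg {a b c : ℤ} (h : IsCoprime a b) (ha : 0 ≤ a)
    (heq : a * b = c ^ 2) : ∃ d, a = d ^ 2 := by
  obtain ⟨d, hd | hd⟩ := Int.sq_of_isCoprime h heq
  · exact ⟨d, hd⟩
  · exact ⟨0, by nlinarith [sq_nonneg d]⟩

def IsPrimitiveQuarticTriple (x y z : ℤ) : Prop :=
  x ^ 4 + 4 * y ^ 4 = z ^ 2 ∧ IsCoprime x y ∧ Odd x ∧ y ≠ 0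

theorem IsPrimitiveQuarticTriple.exists_sq_add_pow_four_eq_pow_four {x y z : ℤ}
    (h : IsPrimitiveQuarticTriple x y z) :
    ∃ p q : ℤ, x ^ 2 + q ^ 4 = p ^ 4 ∧ IsCoprime p q ∧ q ≠ 0 ∧ |z| = p ^ 4 + q ^ 4 := by
  obtain ⟨heq, hxy, hx, hy⟩ := h
  have hpyth : PythagoreanTriple (x ^ 2) (2 * y ^ 2) |z| := by
    unfold PythagoreanTriple
    linear_combination heq - abs_mul_abs_self z
  have hcop : Int.gcd (x ^ 2) (2 * y ^ 2) = 1 := Int.isCoprime_iff_gcd_eq_one.mp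
    ((Int.isCoprime_two_right.mpr hx).mul_right hxy.pow_right).pow_left
  have hz : 0 < |z| := abs_pos.mpr (by rintro rfl; nlinarith [pow_pos (sq_pos_of_ne_zero hy) 2])
  obtain ⟨m, n, hx2, hy2, hzmn, hmn, -, hm⟩ :=
    hpyth.coprime_classification' hcop (Int.odd_iff.mp hx.pow) hz
  have hmn' : m * n = y ^ 2 := by linarith
  have hn : 0 < n := pos_of_mul_pos_right (hmn' ▸ by positivity) hm
  have hcop' : IsCoprime m n := Int.isCoprime_iff_gcd_eq_one.mpr hmn
  obtain ⟨p, rfl⟩ := Int.exists_eq_sq_of_isCoprime_of_nonneg hcop' hm hmn'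
  obtain ⟨q, rfl⟩ := Int.exists_eq_sq_of_isCoprime_of_nonneg hcop'.symm hn.le
    (by linarith : n * p ^ 2 = y ^ 2)
  refine ⟨p, q, by linear_combination hx2, (IsCoprime.pow_iff two_pos two_pos).mp hcop',
    by rintro rfl; simp at hn, by rw [hzmn]; ring⟩

theorem exists_pow_four_add_four_mul_pow_four_of_sq_eq_two_mul {M N q : ℤ}
    (h : q ^ 2 = 2 * M * N) (hq : q ≠ 0) (hMN : IsCoprime M N)
    (hpar : M % 2 = 0 ∧ N % 2 = 1 ∨ M % 2 = 1 ∧ N % 2 = 0) (hM₀ : 0 ≤ M) :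
    ∃ a b : ℤ, M ^ 2 + N ^ 2 = a ^ 4 + 4 * b ^ 4 ∧ IsCoprime a b ∧ Odd a ∧ b ≠ 0 := by
  have hMN_pos : 0 < M * N := by nlinarith [sq_pos_of_ne_zero hq]
  have hN : 0 < N := pos_of_mul_pos_right hMN_pos hM₀
  have hM : 0 < M := pos_of_mul_pos_left hMN_pos hN.le
  clear hMN_pos hM₀
  wlog hMe : M % 2 = 0 ∧ N % 2 = 1 generalizing M N
  · obtain ⟨a, b, hab⟩ := this (by linarith) hMN.symm (by tauto) hM hN
      (hpar.resolve_left hMe).symm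
    exact ⟨a, b, by linarith [hab.1], hab.2⟩
  obtain ⟨M', rfl⟩ := Int.dvd_of_emod_eq_zero hMe.1
  obtain ⟨r, rfl⟩ := (Int.even_pow' two_ne_zero).mp
    (even_iff_two_dvd.mpr ⟨2 * M' * N, by rw [h]; ring⟩)
  have hr : M' * N = r ^ 2 := by linarith
  have hcop : IsCoprime M' N := hMN.of_isCoprime_of_dvd_left (dvd_mul_left M' 2)
  obtain ⟨b, rfl⟩ := Int.exists_eq_sq_of_isCoprime_of_nonneg hcop (by linarith) hr
  obtain ⟨a, rfl⟩ := Int.exists_eq_sq_of_isCoprime_of_nonneg hcop.symm hN.le (by linarith)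
  refine ⟨a, b, by ring, (IsCoprime.pow_iff two_pos two_pos).mp hcop.symm,
    (Int.odd_pow' two_ne_zero).mp (Int.odd_iff.mpr hMe.2), by rintro rfl; simp at hM⟩

theorem exists_isPrimitiveQuarticTriple_of_sq_add_pow_four_eq_pow_four {x p q : ℤ}
    (h : x ^ 2 + q ^ 4 = p ^ 4) (hx : Odd x) (hpq : IsCoprime p q) (hq : q ≠ 0) :
    ∃ a b, IsPrimitiveQuarticTriple a b p := by
  have hpyth : PythagoreanTriple x (q ^ 2) (p ^ 2) := by
    unfold PythagoreanTriple
    linear_combination h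
  have hcop : IsCoprime x (q ^ 2) := by
    have : IsCoprime (x ^ 2) ((q ^ 2) ^ 2) := by
      rw [← pow_mul, show x ^ 2 = p ^ 4 + q ^ 4 * (-1) by linear_combination h]
      exact ((IsCoprime.pow_iff four_pos four_pos).mpr hpq).add_mul_left_left (-1)
    exact (IsCoprime.pow_iff two_pos two_pos).mp this
  have hp : p ≠ 0 := by rintro rfl; nlinarith [pow_pos (sq_pos_of_ne_zero hq) 2, sq_nonneg x]
  obtain ⟨M, N, -, hqMN, hpMN, hMN, hpar, hM⟩ := hpyth.coprime_classification'
    (Int.isCoprime_iff_gcd_eq_one.mp hcop) (Int.odd_iff.mp hx) (by positivity)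
  obtain ⟨a, b, hab, hcopab, ha, hb⟩ := exists_pow_four_add_four_mul_pow_four_of_sq_eq_two_mul
    hqMN hq (Int.isCoprime_iff_gcd_eq_one.mpr hMN) hpar hM
  exact ⟨a, b, by rw [hpMN, hab], hcopab, ha, hb⟩

theorem IsPrimitiveQuarticTriple.exists_natAbs_lt {x y z : ℤ} (h : IsPrimitiveQuarticTriple x y z) :
    ∃ a b c, IsPrimitiveQuarticTriple a b c ∧ c.natAbs < z.natAbs := by
  obtain ⟨p, q, hsub, hpq, hq, hz⟩ := h.exists_sq_add_pow_four_eq_pow_four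
  obtain ⟨a, b, hab⟩ :=
    exists_isPrimitiveQuarticTriple_of_sq_add_pow_four_eq_pow_four hsub h.2.2.1 hpq hq
  refine ⟨a, b, p, hab, Int.natAbs_lt_iff_sq_lt.mpr ?_⟩
  rw [← sq_abs z, hz]
  calc p ^ 2 ≤ (p ^ 2) ^ 2 := Int.le_self_sq _
    _ < p ^ 4 + q ^ 4 := by linarith [pow_pos (sq_pos_of_ne_zero hq) 2]
    _ ≤ (p ^ 4 + q ^ 4) ^ 2 := Int.le_self_sq _

theorem not_isPrimitiveQuarticTriple (x y z : ℤ) : ¬ IsPrimitiveQuarticTriple x y z := by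
  induction hn : z.natAbs using Nat.strong_induction_on generalizing x y z with
  | _ n ih =>
    intro h
    obtain ⟨a, b, c, habc, hc⟩ := h.exists_natAbs_lt
    exact ih _ (hn ▸ hc) a b c rfl habc

theorem pow_four_add_four_mul_pow_four_ne_sq {x y z : ℤ} (hx : x ≠ 0) (hy : y ≠ 0) :
    x ^ 4 + 4 * y ^ 4 ≠ z ^ 2 := by
  intro h
  obtain ⟨g, x, y, hg, hgcd, rfl, rfl⟩ :=
    Int.exists_gcd_one' (Int.gcd_pos_of_ne_zero_left y hx)
  obtain ⟨w, rfl⟩ : (g : ℤ) ^ 2 ∣ z := by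
    rw [← Int.pow_dvd_pow_iff two_ne_zero]
    exact ⟨x ^ 4 + 4 * y ^ 4, by rw [← h]; ring⟩
  have hw : x ^ 4 + 4 * y ^ 4 = w ^ 2 :=
    mul_left_cancel₀ (pow_ne_zero 4 (Int.natCast_ne_zero.mpr hg.ne')) (by linear_combination h)
  have hxy : IsCoprime x y := Int.isCoprime_iff_gcd_eq_one.mpr hgcd
  replace hy : y ≠ 0 := left_ne_zero_of_mul hy
  rcases Int.even_or_odd x with ⟨u, rfl⟩ | hodd
  · have hyu : IsCoprime y u := hxy.symm.of_isCoprime_of_dvd_right ⟨2, by ring⟩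
    obtain ⟨v, rfl⟩ := (Int.even_pow' two_ne_zero).mp
      (even_iff_two_dvd.mpr ⟨8 * u ^ 4 + 2 * y ^ 4, by rw [← hw]; ring⟩)
    refine not_isPrimitiveQuarticTriple y u v ⟨mul_left_cancel₀ four_ne_zero
      (by linear_combination hw), hyu,
      Int.isCoprime_two_left.mp (hxy.of_isCoprime_of_dvd_left ⟨u, by ring⟩), ?_⟩
    rintro rfl
    exact left_ne_zero_of_mul hx (by ring)
  · exact not_isPrimitiveQuarticTriple x y w ⟨hw, hxy, hodd, hy⟩

namespace Matrix

variable {R : Type*} [CommRing R]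

theorem sq_fin_two_eq_trace_smul_sub_det_smul (A : Matrix (Fin 2) (Fin 2) R) :
    A ^ 2 = A.trace • A - A.det • 1 := by
  rw [A.eta_fin_two]
  ext i j
  fin_cases i <;> fin_cases j <;> simp [sq, trace_fin_two, det_fin_two] <;> ring

theorem pow_four_fin_two_eq_smul_add_smul (A : Matrix (Fin 2) (Fin 2) R) :
    A ^ 4 = (A.trace ^ 3 - 2 * A.trace * A.det) • A + (A.det ^ 2 - A.trace ^ 2 * A.det) • 1 := by
  rw [show A ^ 4 = (A ^ 2) ^ 2 by rw [← pow_mul], sq_fin_two_eq_trace_smul_sub_det_smul A]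
  simp only [sq, sub_mul, mul_sub, smul_mul_assoc, mul_smul_comm, one_mul, mul_one]
  rw [← sq, sq_fin_two_eq_trace_smul_sub_det_smul A]
  module

theorem pow_four_traceless_fin_two (a b c : R) :
    !![a, b; c, -a] ^ 4 = ((a ^ 2 + b * c) ^ 2) • 1 := by
  rw [pow_four_fin_two_eq_smul_add_smul, trace_fin_two_of, det_fin_two_of, add_neg_cancel]
  module

theorem eta_fin_two_of_trace_eq_zero {A : Matrix (Fin 2) (Fin 2) R} (h : A.trace = 0) :
    A = !![A 0 0, A 0 1; A 1 0, -A 0 0] := by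
  rw [trace_fin_two] at h
  conv_lhs => rw [A.eta_fin_two, eq_neg_of_add_eq_zero_right h]

end Matrix

theorem eq_zero_of_smul_add_smul_eq_smul_one {R A : Type*} [CommRing R] [IsCancelMulZero R] [Ring A]
    [Algebra R A] [Module.IsTorsionFree R A] {a b r : R} {x y : A} (h : a • x + b • y = r • 1)
    (hxy : x * y ≠ y * x) : a = 0 := by
  by_contra ha
  have hcomm : Commute (a • x) y := by
    rw [eq_sub_of_add_eq h]
    exact ((Commute.one_left y).smul_left r).sub_left ((Commute.refl y).smul_left b)
  exact hxy (smul_right_injective A ha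
    (by simpa only [smul_mul_assoc, mul_smul_comm] using hcomm.eq))

theorem trace_eq_zero_of_pow_four_add_pow_four_eq {c : ℤ} (hc : c ≠ 0)
    {X Y : Matrix (Fin 2) (Fin 2) ℤ} (h : X ^ 4 + Y ^ 4 = c ^ 4 • 1) (hXY : X * Y ≠ Y * X) :
    X.trace = 0 := by
  rw [X.pow_four_fin_two_eq_smul_add_smul, Y.pow_four_fin_two_eq_smul_add_smul] at h
  set t := X.trace
  set d := X.det
  set s := Y.trace
  set e := Y.det
  have hX : t ^ 3 - 2 * t * d = 0 := eq_zero_of_smul_add_smul_eq_smul_one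
    (b := s ^ 3 - 2 * s * e) (r := c ^ 4 - (d ^ 2 - t ^ 2 * d) - (e ^ 2 - s ^ 2 * e))
    (by linear_combination (norm := module) h) hXY
  have hY : s ^ 3 - 2 * s * e = 0 := eq_zero_of_smul_add_smul_eq_smul_one
    (b := t ^ 3 - 2 * t * d) (r := c ^ 4 - (d ^ 2 - t ^ 2 * d) - (e ^ 2 - s ^ 2 * e))
    (by linear_combination (norm := module) h) (Ne.symm hXY)
  have hk : d ^ 2 - t ^ 2 * d + (e ^ 2 - s ^ 2 * e) = c ^ 4 :=
    smul_left_injective ℤ (one_ne_zero : (1 : Matrix (Fin 2) (Fin 2) ℤ) ≠ 0)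
      (by rw [hX, hY] at h; linear_combination (norm := module) h)
  by_contra ht
  have htd : t ^ 2 = 2 * d := mul_left_cancel₀ ht (by linear_combination hX)
  rcases eq_or_ne s 0 with hs | hs
  · obtain ⟨u, hu⟩ : Even t := (Int.even_pow' two_ne_zero).mp ⟨d, by linarith⟩
    have hd : d = 2 * u ^ 2 := by rw [hu] at htd; linarith
    refine pow_four_add_four_mul_pow_four_ne_sq (y := u) (z := e) hc
      (by rintro rfl; simp_all) ?_
    rw [hs, hu, hd] at hk
    linear_combination -hk
  · have hse : s ^ 2 = 2 * e := mul_left_cancel₀ hs (by linear_combination hY)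
    have hc4 : 0 < c ^ 4 := by positivity
    nlinarith [sq_nonneg d, sq_nonneg e]

theorem linearIndependent_iff_traceless_mul_ne_mul (a b c e f g : ℤ) :
    LinearIndependent ℚ ![![(a : ℚ), b, c], ![(e : ℚ), f, g]] ↔
      !![a, b; c, -a] * !![e, f; g, -e] ≠ !![e, f; g, -e] * !![a, b; c, -a] := by
  rw [← crossProduct_ne_zero_iff_linearIndependent, not_iff_not]
  simp only [cross_apply, Matrix.mul_fin_two, Matrix.cons_eq_zero_iff, Matrix.zero_empty,
    EmbeddingLike.apply_eq_iff_eq, Matrix.vecCons_inj, and_true, sub_eq_zero,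
    Matrix.cons_val_zero, Matrix.cons_val_one, Matrix.cons_val_two, Matrix.tail_cons,
    Matrix.head_cons]
  norm_cast
  constructor
  · rintro ⟨h₁, h₂, h₃⟩
    refine ⟨⟨?_, ?_⟩, ?_, ?_⟩
    · linear_combination h₁
    · linear_combination 2 * h₃
    · linear_combination 2 * h₂
    · linear_combination -h₁
  · rintro ⟨⟨h₁, h₂⟩, h₃, -⟩
    refine ⟨?_, ?_, ?_⟩ <;> linarith

theorem stmt_5 (c : ℤ) (hc : c ≠ 0) (X Y : Matrix (Fin 2) (Fin 2) ℤ) :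
    (X ^ 4 + Y ^ 4 = c ^ 4 • (1 : Matrix (Fin 2) (Fin 2) ℤ) ∧ X * Y ≠ Y * X) ↔
    (∃ t₁ t₂ t₃ s₁ s₂ s₃ : ℤ,
      X = !![t₁, t₂; t₃, -t₁] ∧ Y = !![s₁, s₂; s₃, -s₁] ∧
      (t₁ ^ 2 + t₂ * t₃) ^ 2 + (s₁ ^ 2 + s₂ * s₃) ^ 2 = c ^ 4 ∧
      LinearIndependent ℚ
        ![![(t₁ : ℚ), (t₂ : ℚ), (t₃ : ℚ)], ![(s₁ : ℚ), (s₂ : ℚ), (s₃ : ℚ)]]) := by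
  constructor
  · rintro ⟨h, hXY⟩
    have hX := Matrix.eta_fin_two_of_trace_eq_zero
      (trace_eq_zero_of_pow_four_add_pow_four_eq hc h hXY)
    have hY := Matrix.eta_fin_two_of_trace_eq_zero
      (trace_eq_zero_of_pow_four_add_pow_four_eq hc (by rwa [add_comm]) (Ne.symm hXY))
    rw [hX, hY] at h hXY
    rw [Matrix.pow_four_traceless_fin_two, Matrix.pow_four_traceless_fin_two, ← add_smul] at h
    exact ⟨_, _, _, _, _, _, hX, hY,
      smul_left_injective ℤ (one_ne_zero : (1 : Matrix (Fin 2) (Fin 2) ℤ) ≠ 0) h,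
      (linearIndependent_iff_traceless_mul_ne_mul ..).mpr hXY⟩
  · rintro ⟨t₁, t₂, t₃, s₁, s₂, s₃, rfl, rfl, h, hli⟩
    exact ⟨by rw [Matrix.pow_four_traceless_fin_two, Matrix.pow_four_traceless_fin_two,
        ← add_smul, h],
      (linearIndependent_iff_traceless_mul_ne_mul ..).mp hli⟩
end

section
/- Let p be a prime with p ≡ 5 (mod 8) or p ≡ 7 (mod 8), and let ε ∈ {1, −1}. Then X, Y ∈ M₂(ℤ) satisfy X² + 2Y² = εp·I if and only if one of the following holds for some integers: (i) X = [[t₁, t₂],[t₃, −t₁]] and Y = [[s₁, s₂],[s₃, −s₁]] with t₁² + t₂t₃ + 2(s₁² + s₂s₃) = εp; (ii) X = t₁I and Y = [[t₄, t₂],[t₃, −t₄]] with t₁² + 2(t₄² + t₂t₃) = εp; (iii) X = [[t₁, t₂],[t₃, −t₁]] and Y = t₄I with t₁² + t₂t₃ + 2t₄² = εp. -/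
/-!
By Cayley–Hamilton, `X² + 2Y² = n•1` is equivalent to the linear relation
`a•X + 2c•Y = m•1` with `a = tr X`, `c = tr Y`, `m = n + det X + 2 det Y`. If `a = 0` and
`c ≠ 0`, this forces `Y` to be scalar, and symmetrically; if `a = c = 0` both matrices are
traceless. Once the shapes are known, the squares are scalar and the equation becomes the
stated identity.

It remains to rule out `a ≠ 0 ≠ c`. Taking trace and determinant of the linear relation yields
`4a²n = q(q - 8 det Y)` and `8c²n = q(q - 4 det X)` with `q = a² + 2c²`. Dividing `a` and `c`
by their gcd, the reduced `q` divides `8n = ±8p`. Since `-2` is not a square mod `p`, `p` does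
not divide `a² + 2c²` for coprime `a, c`, so `q ∣ 8`, which is impossible when `a, c ≠ 0`.
-/

open Matrix

theorem Int.dvd_and_dvd_of_dvd_sq_add_mul_sq {p : ℕ} [Fact p.Prime] {k : ℤ}
    (hk : ¬IsSquare (-(k : ZMod p))) {a c : ℤ} (h : (p : ℤ) ∣ a ^ 2 + k * c ^ 2) :
    (p : ℤ) ∣ a ∧ (p : ℤ) ∣ c := by
  simp only [← ZMod.intCast_zmod_eq_zero_iff_dvd] at h ⊢
  push_cast at h
  have hc : (c : ZMod p) = 0 := by
    by_contra hc
    refine hk ⟨a / c, ?_⟩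
    field_simp
    linear_combination -h
  rw [hc, zero_pow two_ne_zero, mul_zero, add_zero] at h
  exact ⟨pow_eq_zero_iff two_ne_zero |>.mp h, hc⟩

theorem Int.eq_zero_or_eq_zero_of_sq_add_two_mul_sq_dvd_eight {a c : ℤ}
    (h : a ^ 2 + 2 * c ^ 2 ∣ 8) : a = 0 ∨ c = 0 := by
  by_contra! hac
  have hle : a ^ 2 + 2 * c ^ 2 ≤ 8 := Int.le_of_dvd (by norm_num) h
  have ha : 1 ≤ a ^ 2 := by nlinarith [Int.one_le_abs hac.1, sq_abs a]
  have hc : 1 ≤ c ^ 2 := by nlinarith [Int.one_le_abs hac.2, sq_abs c]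
  have : a ≤ 2 := by nlinarith
  have : -2 ≤ a := by nlinarith
  have : c ≤ 1 := by nlinarith
  have : -1 ≤ c := by nlinarith
  interval_cases a <;> interval_cases c <;> simp_all

theorem Int.eq_zero_or_eq_zero_of_sq_add_two_mul_sq_dvd_mul_sq {p : ℕ} [Fact p.Prime]
    (hp : ¬IsSquare (-2 : ZMod p)) {n a c : ℤ} (hn : n.natAbs = p)
    (ha : a ^ 2 + 2 * c ^ 2 ∣ 8 * a ^ 2 * n) (hc : a ^ 2 + 2 * c ^ 2 ∣ 8 * c ^ 2 * n) :
    a = 0 ∨ c = 0 := by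
  rcases eq_or_ne a 0 with ha₀ | ha₀
  · exact Or.inl ha₀
  obtain ⟨g, a₁, c₁, hg, hgcd, rfl, rfl⟩ :=
    Int.exists_gcd_one' (Int.gcd_pos_of_ne_zero_left c ha₀)
  have hcop : IsCoprime a₁ c₁ := Int.isCoprime_iff_gcd_eq_one.2 hgcd
  have hg2 : (g : ℤ) ^ 2 ≠ 0 := by positivity
  have hcancel : ∀ u : ℤ, (a₁ * g) ^ 2 + 2 * (c₁ * g) ^ 2 ∣ 8 * (u * g) ^ 2 * n ↔
      a₁ ^ 2 + 2 * c₁ ^ 2 ∣ 8 * u ^ 2 * n := fun u => by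
    rw [show (a₁ * g) ^ 2 + 2 * (c₁ * g) ^ 2 = g ^ 2 * (a₁ ^ 2 + 2 * c₁ ^ 2) by ring,
      show 8 * (u * g) ^ 2 * n = g ^ 2 * (8 * u ^ 2 * n) by ring, mul_dvd_mul_iff_left hg2]
  rw [hcancel] at ha hc
  have h8n : a₁ ^ 2 + 2 * c₁ ^ 2 ∣ 8 * n := by
    obtain ⟨u, v, huv⟩ := hcop.pow (m := 2) (n := 2)
    have h := dvd_add (ha.mul_left u) (hc.mul_left v)
    rwa [show u * (8 * a₁ ^ 2 * n) + v * (8 * c₁ ^ 2 * n) = 8 * n by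
      linear_combination 8 * n * huv] at h
  have h8p : a₁ ^ 2 + 2 * c₁ ^ 2 ∣ (8 : ℤ) * p := by
    rw [← Int.dvd_natAbs, Int.natAbs_mul, hn] at h8n
    exact_mod_cast h8n
  have hpq : ¬(p : ℤ) ∣ a₁ ^ 2 + 2 * c₁ ^ 2 := fun hpq => by
    obtain ⟨hpa, hpc⟩ := Int.dvd_and_dvd_of_dvd_sq_add_mul_sq (k := 2) (by simpa using hp) hpq
    have := Int.isUnit_iff_natAbs_eq.1 (hcop.isUnit_of_dvd' hpa hpc)
    exact (Fact.out : p.Prime).ne_one (by simpa using this)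
  have hpZ : Prime (p : ℤ) := Int.prime_iff_natAbs_prime.2 (by simpa using Fact.out)
  have h8 : a₁ ^ 2 + 2 * c₁ ^ 2 ∣ (8 : ℤ) :=
    (hpZ.coprime_iff_not_dvd.2 hpq).symm.dvd_of_dvd_mul_right h8p
  rcases Int.eq_zero_or_eq_zero_of_sq_add_two_mul_sq_dvd_eight h8 with rfl | rfl
  · simp at ha₀
  · simp

namespace Matrix

variable {R : Type*} [CommRing R]

theorem sq_eq_trace_smul_sub_det_smul_one (M : Matrix (Fin 2) (Fin 2) R) :
    M ^ 2 = M.trace • M - M.det • 1 := by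
  ext i j
  fin_cases i <;> fin_cases j <;> simp [sq, mul_apply, trace_fin_two, det_fin_two] <;> ring

theorem sq_of_trace_eq_zero {M : Matrix (Fin 2) (Fin 2) R} (hM : M.trace = 0) :
    M ^ 2 = -M.det • 1 := by
  rw [sq_eq_trace_smul_sub_det_smul_one, hM, zero_smul, zero_sub, neg_smul]

theorem exists_eq_of_trace_eq_zero {M : Matrix (Fin 2) (Fin 2) R} (hM : M.trace = 0) :
    ∃ t₁ t₂ t₃ : R, M = !![t₁, t₂; t₃, -t₁] := by
  refine ⟨M 0 0, M 0 1, M 1 0, (eta_fin_two M).trans ?_⟩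
  rw [trace_fin_two] at hM
  rw [eq_neg_of_add_eq_zero_right hM]

theorem traceless_sq (t₁ t₂ t₃ : R) :
    !![t₁, t₂; t₃, -t₁] ^ 2 = (t₁ ^ 2 + t₂ * t₃) • 1 := by
  rw [sq_of_trace_eq_zero (by simp [trace_fin_two]), det_fin_two_of]
  congr 1
  ring

theorem smul_one_sq (t : R) : (t • (1 : Matrix (Fin 2) (Fin 2) R)) ^ 2 = t ^ 2 • 1 := by
  rw [smul_pow, one_pow]

theorem det_smul_one_add_smul (s t : R) (M : Matrix (Fin 2) (Fin 2) R) :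
    (s • 1 + t • M).det = s ^ 2 + s * t * M.trace + t ^ 2 * M.det := by
  simp [det_fin_two, trace_fin_two]
  ring

section SqAddTwoSq

variable {X Y : Matrix (Fin 2) (Fin 2) R} {n : R}

theorem trace_smul_add_two_trace_smul_eq (h : X ^ 2 + (2 : R) • Y ^ 2 = n • 1) :
    X.trace • X + (2 * Y.trace) • Y = (n + X.det + 2 * Y.det) • 1 := by
  rw [sq_eq_trace_smul_sub_det_smul_one, sq_eq_trace_smul_sub_det_smul_one] at h
  rw [← sub_eq_zero] at h ⊢
  rw [← h]
  simp only [smul_sub, smul_smul, add_smul]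
  abel

theorem trace_sq_mul_eq (h : X ^ 2 + (2 : R) • Y ^ 2 = n • 1) :
    4 * X.trace ^ 2 * n = (X.trace ^ 2 + 2 * Y.trace ^ 2) *
      (X.trace ^ 2 + 2 * Y.trace ^ 2 - 8 * Y.det) ∧
    8 * Y.trace ^ 2 * n = (X.trace ^ 2 + 2 * Y.trace ^ 2) *
      (X.trace ^ 2 + 2 * Y.trace ^ 2 - 4 * X.det) := by
  set m := n + X.det + 2 * Y.det with hm
  have hlin := trace_smul_add_two_trace_smul_eq h
  have htr : X.trace ^ 2 + 2 * Y.trace ^ 2 = 2 * m := by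
    have := congrArg trace hlin
    simp only [trace_add, trace_smul, trace_one, Fintype.card_fin, smul_eq_mul] at this
    linear_combination this
  have hdet : X.trace ^ 2 * X.det = m ^ 2 - 2 * Y.trace ^ 2 * m + 4 * Y.trace ^ 2 * Y.det := by
    have := congrArg det (eq_sub_of_add_eq hlin)
    rw [det_smul, sub_eq_add_neg, ← neg_smul, det_smul_one_add_smul] at this
    simp only [Fintype.card_fin] at this
    linear_combination this
  constructor
  · linear_combination (-4 * X.trace ^ 2) * hm - 4 * hdet -
      (X.trace ^ 2 + 2 * Y.trace ^ 2 - 2 * m) * htr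
  · linear_combination (-8 * Y.trace ^ 2) * hm + 4 * hdet -
      (X.trace ^ 2 + 2 * Y.trace ^ 2 + 2 * m) * htr

variable [IsDomain R]

theorem exists_eq_smul_one_of_smul_eq_smul_one {c m : R} (hc : c ≠ 0) (h : c • X = m • 1) :
    ∃ t : R, X = t • 1 := by
  have hm : c * X 0 0 = m := by simpa using congrFun (congrFun h 0) 0
  exact ⟨X 0 0, smul_right_injective _ hc (h.trans (by dsimp only; rw [smul_smul, hm]))⟩

theorem sq_add_two_smul_sq_eq_smul_one_iff {u v : R} (hX : X ^ 2 = u • 1) (hY : Y ^ 2 = v • 1) :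
    X ^ 2 + (2 : R) • Y ^ 2 = n • 1 ↔ u + 2 * v = n := by
  rw [hX, hY, smul_smul, ← add_smul]
  exact (smul_left_injective R one_ne_zero).eq_iff

end SqAddTwoSq

theorem trace_eq_zero_or_trace_eq_zero_of_sq_add_two_smul_sq_eq {p : ℕ} [Fact p.Prime]
    (hp : ¬IsSquare (-2 : ZMod p)) {X Y : Matrix (Fin 2) (Fin 2) ℤ} {n : ℤ} (hn : n.natAbs = p)
    (h : X ^ 2 + (2 : ℤ) • Y ^ 2 = n • 1) : X.trace = 0 ∨ Y.trace = 0 := by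
  obtain ⟨ha, hc⟩ := trace_sq_mul_eq h
  refine Int.eq_zero_or_eq_zero_of_sq_add_two_mul_sq_dvd_mul_sq hp hn ?_ (Dvd.intro _ hc.symm)
  exact ⟨2 * (X.trace ^ 2 + 2 * Y.trace ^ 2 - 8 * Y.det), by linear_combination 2 * ha⟩

end Matrix

theorem stmt_14 (p : ℕ) (hp : p.Prime) (hp8 : p % 8 = 5 ∨ p % 8 = 7)
    (ε : ℤ) (hε : ε = 1 ∨ ε = -1) (X Y : Matrix (Fin 2) (Fin 2) ℤ) :
    X ^ 2 + (2 : ℤ) • Y ^ 2 = (ε * p) • (1 : Matrix (Fin 2) (Fin 2) ℤ) ↔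
    ((∃ t₁ t₂ t₃ s₁ s₂ s₃ : ℤ, X = !![t₁, t₂; t₃, -t₁] ∧ Y = !![s₁, s₂; s₃, -s₁] ∧
        t₁ ^ 2 + t₂ * t₃ + 2 * (s₁ ^ 2 + s₂ * s₃) = ε * p) ∨
     (∃ t₁ t₂ t₃ t₄ : ℤ, X = t₁ • (1 : Matrix (Fin 2) (Fin 2) ℤ) ∧
        Y = !![t₄, t₂; t₃, -t₄] ∧ t₁ ^ 2 + 2 * (t₄ ^ 2 + t₂ * t₃) = ε * p) ∨
     (∃ t₁ t₂ t₃ t₄ : ℤ, X = !![t₁, t₂; t₃, -t₁] ∧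
        Y = t₄ • (1 : Matrix (Fin 2) (Fin 2) ℤ) ∧ t₁ ^ 2 + t₂ * t₃ + 2 * t₄ ^ 2 = ε * p)) := by
  have : Fact p.Prime := ⟨hp⟩
  have hnsq : ¬IsSquare (-2 : ZMod p) := by
    rw [ZMod.exists_sq_eq_neg_two_iff (by omega)]
    omega
  have hεp : (ε * p).natAbs = p := by rcases hε with rfl | rfl <;> simp
  constructor
  · intro h
    have hlin := trace_smul_add_two_trace_smul_eq h
    by_cases hX : X.trace = 0 <;> by_cases hY : Y.trace = 0
    · obtain ⟨t₁, t₂, t₃, rfl⟩ := exists_eq_of_trace_eq_zero hX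
      obtain ⟨s₁, s₂, s₃, rfl⟩ := exists_eq_of_trace_eq_zero hY
      exact Or.inl ⟨t₁, t₂, t₃, s₁, s₂, s₃, rfl, rfl,
        (sq_add_two_smul_sq_eq_smul_one_iff (traceless_sq ..) (traceless_sq ..)).1 h⟩
    · rw [hX, zero_smul, zero_add] at hlin
      obtain ⟨t₄, rfl⟩ := exists_eq_smul_one_of_smul_eq_smul_one (by simpa using hY) hlin
      obtain ⟨t₁, t₂, t₃, rfl⟩ := exists_eq_of_trace_eq_zero hX
      exact Or.inr <| Or.inr ⟨t₁, t₂, t₃, t₄, rfl, rfl,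
        (sq_add_two_smul_sq_eq_smul_one_iff (traceless_sq ..) (smul_one_sq _)).1 h⟩
    · rw [hY, mul_zero, zero_smul, add_zero] at hlin
      obtain ⟨t₁, rfl⟩ := exists_eq_smul_one_of_smul_eq_smul_one hX hlin
      obtain ⟨t₄, t₂, t₃, rfl⟩ := exists_eq_of_trace_eq_zero hY
      exact Or.inr <| Or.inl ⟨t₁, t₂, t₃, t₄, rfl, rfl,
        (sq_add_two_smul_sq_eq_smul_one_iff (smul_one_sq _) (traceless_sq ..)).1 h⟩
    · exact ((trace_eq_zero_or_trace_eq_zero_of_sq_add_two_smul_sq_eq hnsq hεp h).elim hX hY).elim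
  · rintro (⟨t₁, t₂, t₃, s₁, s₂, s₃, rfl, rfl, h⟩ | ⟨t₁, t₂, t₃, t₄, rfl, rfl, h⟩ |
      ⟨t₁, t₂, t₃, t₄, rfl, rfl, h⟩)
    · exact (sq_add_two_smul_sq_eq_smul_one_iff (traceless_sq ..) (traceless_sq ..)).2 h
    · exact (sq_add_two_smul_sq_eq_smul_one_iff (smul_one_sq _) (traceless_sq ..)).2 h
    · exact (sq_add_two_smul_sq_eq_smul_one_iff (traceless_sq ..) (smul_one_sq _)).2 h
end
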